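/- Let w be a word over Σ with ι(w) = k ≥ 1. If ι(w^s) − ι(w^{s−1}) = k for all s ∈ ℕ, then ζ(w^s) − ζ(w^{s−1}) = k for all s ∈ ℕ. -/

import Mathlib

open List

variable {α : Type*}

/-- `w` is `k`-universal: every word of length `k` over the alphabet `α`
is a scattered factor (subsequence) of `w`. -/
def IsUniversal [Fintype α] (k : ℕ) (w : List α) : Prop :=
  ∀ u : List α, u.length = k → u.Sublist w

/-- The universality index `ι(w)`: the largest `k` such that `w` is `k`-universal. -/
noncomputable def univIndex [Fintype α] (w : List α) : ℕ :=
  sSup {k | IsUniversal k w}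

/-- The circular universality index `ζ(w)`: the largest `k` such that some
conjugate of `w` is `k`-universal. -/
noncomputable def circIndex [Fintype α] (w : List α) : ℕ :=
  sSup {k | ∃ u v : List α, w = u ++ v ∧ IsUniversal k (v ++ u)}

/-- `wpow w s = w^s`, the `s`-fold concatenation of `w`. -/
def wpow (w : List α) (s : ℕ) : List α := (List.replicate s w).flatten

/-- Auxiliary (fuelled) computation of the remainder of the arch factorisation:
greedily remove the shortest prefix containing every letter of the alphabet. -/
def remAux [Fintype α] [DecidableEq α] : ℕ → List α → List α
  | 0, w => w
  | (n+1), w =>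
    match (List.range' 1 w.length).find?
        (fun m => decide ((w.take m).toFinset = Finset.univ)) with
    | none => w
    | some m => remAux n (w.drop m)

/-- `rem w = r(w)`, the remainder of the arch factorisation of `w`. -/
def rem [Fintype α] [DecidableEq α] (w : List α) : List α := remAux w.length w

/-- Auxiliary (fuelled) computation of the list of arches of `w`. -/
def archesAux [Fintype α] [DecidableEq α] : ℕ → List α → List (List α)
  | 0, _ => []
  | (n+1), w =>
    match (List.range' 1 w.length).find?
        (fun m => decide ((w.take m).toFinset = Finset.univ)) with
    | none => []
    | some m => (w.take m) :: archesAux n (w.drop m)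

/-- `arches w`: the list `[arch₁(w), …, arch_{ι(w)}(w)]` of arches of `w`. -/
def arches [Fintype α] [DecidableEq α] (w : List α) : List (List α) :=
  archesAux w.length w

/-! If `ι(w^n) = n ι(w)` for every `n`, then `ζ(w) = ι(w)`: a conjugate `vu` of `w = uv` satisfies
`(vu)^n <+ w^(n+1)`, so an `m`-universal conjugate gives `n m ≤ (n + 1) ι(w)` for every `n`,
which forces `m ≤ ι(w)`. Under the hypothesis of the theorem `ι(w^s) = s k`, so this applies
to every power `w^s`, and `ζ(w^s) = s k`. -/

section Powers

@[simp]
lemma wpow_zero (w : List α) : wpow w 0 = [] := rfl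

lemma wpow_succ (w : List α) (s : ℕ) : wpow w (s + 1) = w ++ wpow w s := rfl

lemma wpow_add (w : List α) (s t : ℕ) : wpow w (s + t) = wpow w s ++ wpow w t := by
  simp only [wpow, List.replicate_add, List.flatten_append]

lemma wpow_mul (w : List α) (s t : ℕ) : wpow w (s * t) = wpow (wpow w s) t := by
  induction t with
  | zero => rfl
  | succ t ih => rw [Nat.mul_succ, Nat.add_comm, wpow_add, ih, wpow_succ]

lemma wpow_append_succ (u v : List α) (t : ℕ) :
    wpow (u ++ v) (t + 1) = u ++ wpow (v ++ u) t ++ v := by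
  induction t with
  | zero => simp [wpow_succ]
  | succ t ih => rw [wpow_succ, ih, wpow_succ]; simp

lemma wpow_append_comm_sublist (u v : List α) (t : ℕ) :
    wpow (v ++ u) t <+ wpow (u ++ v) (t + 1) := by
  rw [wpow_append_succ]
  exact (List.infix_append u _ v).sublist

end Powers

section Universality

variable [Fintype α]

lemma isUniversal_zero (w : List α) : IsUniversal 0 w := by
  intro u hu
  simp [List.length_eq_zero_iff.mp hu]

lemma IsUniversal.mono {k : ℕ} {x y : List α} (hx : IsUniversal k x) (hxy : x <+ y) :
    IsUniversal k y :=
  fun u hu => (hx u hu).trans hxy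

lemma IsUniversal.append {a b : ℕ} {x y : List α} (hx : IsUniversal a x)
    (hy : IsUniversal b y) : IsUniversal (a + b) (x ++ y) := by
  intro u hu
  rw [← List.take_append_drop a u]
  exact (hx _ (by simp [hu])).append (hy _ (by simp [hu]))

lemma IsUniversal.wpow {m : ℕ} {x : List α} (hx : IsUniversal m x) (t : ℕ) :
    IsUniversal (t * m) (wpow x t) := by
  induction t with
  | zero => simpa using isUniversal_zero []
  | succ t ih =>
    rw [wpow_succ, Nat.succ_mul, Nat.add_comm]
    exact hx.append ih

lemma bddAbove_setOf_isUniversal [Nonempty α] (w : List α) :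
    BddAbove {k | IsUniversal k w} := by
  refine ⟨w.length, fun k hk => ?_⟩
  obtain ⟨a⟩ := ‹Nonempty α›
  simpa using (hk (List.replicate k a) (by simp)).length_le

lemma isUniversal_univIndex [Nonempty α] (w : List α) : IsUniversal (univIndex w) w :=
  Nat.sSup_mem ⟨0, isUniversal_zero w⟩ (bddAbove_setOf_isUniversal w)

lemma IsUniversal.le_univIndex [Nonempty α] {k : ℕ} {w : List α} (hw : IsUniversal k w) :
    k ≤ univIndex w :=
  le_csSup (bddAbove_setOf_isUniversal w) hw

lemma circIndex_nil : circIndex ([] : List α) = univIndex ([] : List α) := by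
  unfold circIndex univIndex
  congr 1
  ext k
  simp [eq_comm (a := ([] : List α))]

lemma le_univIndex_of_isUniversal_conj [Nonempty α] {x u v : List α} {m : ℕ}
    (hx : ∀ n, univIndex (wpow x n) = n * univIndex x) (huv : x = u ++ v)
    (hm : IsUniversal m (v ++ u)) : m ≤ univIndex x := by
  have bound : ∀ n, n * m ≤ (n + 1) * univIndex x := fun n => by
    rw [← hx, huv]
    exact ((hm.wpow n).mono (wpow_append_comm_sublist u v n)).le_univIndex
  -- `n = ι + 1` gives `(ι + 1) m ≤ (ι + 2) ι < (ι + 1)²`.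
  by_contra! hlt
  have := bound (univIndex x + 1)
  nlinarith

lemma circIndex_eq_univIndex {x : List α}
    (hx : ∀ n, univIndex (wpow x n) = n * univIndex x) : circIndex x = univIndex x := by
  cases isEmpty_or_nonempty α
  -- Over an empty alphabet both indices are junk values of `sSup`, but `x = []`.
  · rw [Subsingleton.elim x [], circIndex_nil]
  · refine IsGreatest.csSup_eq ⟨⟨[], x, by simp, by simpa using isUniversal_univIndex x⟩, ?_⟩
    rintro m ⟨u, v, huv, hm⟩
    exact le_univIndex_of_isUniversal_conj hx huv hm

end Universality

theorem circ_growth_of_univ_growth_general [Fintype α] (w : List α) (k : ℕ)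
    (hk : univIndex w = k)
    (h : ∀ s : ℕ, 1 ≤ s → univIndex (wpow w s) = univIndex (wpow w (s - 1)) + k) :
    ∀ s : ℕ, 1 ≤ s → circIndex (wpow w s) = circIndex (wpow w (s - 1)) + k := by
  have univ_nil : univIndex ([] : List α) = 0 := by
    simpa [wpow_succ, hk] using h 1 le_rfl
  have univ_wpow : ∀ s, univIndex (wpow w s) = s * k := by
    intro s
    induction s with
    | zero => simpa using univ_nil
    | succ s ih => rw [h (s + 1) (by omega), Nat.add_sub_cancel, ih, Nat.succ_mul]
  have circ_wpow : ∀ s, circIndex (wpow w s) = s * k := fun s => by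
    have linear : ∀ n, univIndex (wpow (wpow w s) n) = n * univIndex (wpow w s) := fun n => by
      rw [← wpow_mul, univ_wpow, univ_wpow, Nat.mul_right_comm, Nat.mul_comm n]
    rw [circIndex_eq_univIndex linear, univ_wpow]
  intro s hs
  obtain ⟨t, rfl⟩ := Nat.exists_eq_add_of_le' hs
  rw [circ_wpow, circ_wpow, Nat.add_sub_cancel, Nat.succ_mul]

theorem circ_growth_of_univ_growth [Fintype α] (w : List α) (k : ℕ)
    (hk : univIndex w = k) (hk1 : 1 ≤ k)
    (h : ∀ s : ℕ, 1 ≤ s → univIndex (wpow w s) = univIndex (wpow w (s - 1)) + k) :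
    ∀ s : ℕ, 1 ≤ s → circIndex (wpow w s) = circIndex (wpow w (s - 1)) + k :=
  circ_growth_of_univ_growth_general w k hk h
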